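/- Let h_1, h_2 ∈ {1, …, t−1} with h_1 + h_2 − 1 ≤ t, and let z_1, z_2 be reals with z_1 > μ_{h_1} − λ and z_2 > μ_{h_2} − λ. Then z_1 + z_2 > μ_{h_1 + h_2 − 1} − λ. -/

import Mathlib

/-!
Removing the summands `a_1, …, a_{h₂-1}` from `μ_{h₁+h₂-1}` leaves `a_{h₁+1} + ⋯ + a_{h₁+h₂-1}`,
which is dominated term by term by `a_1 + ⋯ + a_{h₂-1}` since the `a_i` decrease; hence
`μ_{h₁+h₂-1} ≤ μ_{h₁} + μ_{h₂-1} = μ_{h₁} + μ_{h₂} - a_{h₂} ≤ μ_{h₁} + μ_{h₂} - λ`,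
because `λ ≤ a_t ≤ a_{h₂}` by minimality of the cover.
-/

/-- `μ_h = a_1 + ⋯ + a_h` (as a real number). -/
noncomputable def mu (a : ℕ → ℕ) (h : ℕ) : ℝ := ∑ i ∈ Finset.Icc 1 h, (a i : ℝ)

/-- `λ = μ_t − b`, the excess weight of the cover. -/
noncomputable def lam (a : ℕ → ℕ) (t b : ℕ) : ℝ := mu a t - (b : ℝ)

/-- `ρ_h = max(0, a_{h+1} − (a_1 − λ))`. -/
noncomputable def rho (a : ℕ → ℕ) (t b : ℕ) (h : ℕ) : ℝ :=
  max 0 ((a (h + 1) : ℝ) - ((a 1 : ℝ) - lam a t b))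

/-- `w_k(x) = k·x + (1 − k·ρ₁)/2`, where `r` stands for `ρ₁`. -/
noncomputable def wk (r k x : ℝ) : ℝ := k * x + (1 - k * r) / 2

theorem mu_zero (a : ℕ → ℕ) : mu a 0 = 0 := by
  simp [mu]

theorem mu_succ (a : ℕ → ℕ) (n : ℕ) : mu a (n + 1) = mu a n + a (n + 1) :=
  Finset.sum_Icc_succ_top (by omega) _

theorem mu_add_le_of_antitoneOn {a : ℕ → ℕ} {m n : ℕ} (ha : AntitoneOn a (Set.Icc 1 (m + n))) :
    mu a (m + n) ≤ mu a m + mu a n := by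
  induction n with
  | zero => simp [mu_zero]
  | succ n ih =>
    have hprefix := ih (ha.mono (Set.Icc_subset_Icc_right (by omega)))
    have hlast : (a (m + n + 1) : ℝ) ≤ a (n + 1) := by
      exact_mod_cast ha ⟨by omega, by omega⟩ ⟨by omega, by omega⟩ (by omega)
    rw [← add_assoc, mu_succ, mu_succ]
    linarith

theorem pair_sum_lower_bound_general
    (t b : ℕ) (a : ℕ → ℕ) (h₁ h₂ : ℕ) (z₁ z₂ : ℝ)
    (hmono : ∀ i j, 1 ≤ i → i ≤ j → j ≤ t → a j ≤ a i)
    (hmin : mu a t - (a t : ℝ) ≤ (b : ℝ))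
    (hh21 : 1 ≤ h₂) (hh2t : h₂ ≤ t - 1)
    (hsum : h₁ + h₂ - 1 ≤ t)
    (hz1 : mu a h₁ - lam a t b < z₁) (hz2 : mu a h₂ - lam a t b < z₂) :
    mu a (h₁ + h₂ - 1) - lam a t b < z₁ + z₂ := by
  obtain ⟨n, rfl⟩ : ∃ n, h₂ = n + 1 := ⟨h₂ - 1, by omega⟩
  have ha : AntitoneOn a (Set.Icc 1 t) := fun i hi j hj hij => hmono i j hi.1 hij hj.2
  have hsub := mu_add_le_of_antitoneOn (m := h₁) (n := n)
    (ha.mono (Set.Icc_subset_Icc_right (by omega)))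
  have hlam : lam a t b ≤ a (n + 1) := by
    have hat : (a t : ℝ) ≤ a (n + 1) := by
      exact_mod_cast ha ⟨by omega, by omega⟩ ⟨by omega, le_rfl⟩ (by omega)
    unfold lam
    linarith
  rw [mu_succ] at hz2
  rw [show h₁ + (n + 1) - 1 = h₁ + n by omega]
  linarith

/-- If `z₁ > μ_{h₁} − λ` and `z₂ > μ_{h₂} − λ` with
`1 ≤ h₁, h₂ ≤ t − 1` and `h₁ + h₂ − 1 ≤ t`, then `z₁ + z₂ > μ_{h₁+h₂−1} − λ`. -/
theorem pair_sum_lower_bound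
    (t b : ℕ) (a : ℕ → ℕ) (h₁ h₂ : ℕ) (z₁ z₂ : ℝ)
    (ht : 2 ≤ t)
    (hpos : ∀ i, 1 ≤ i → i ≤ t → 0 < a i)
    (hmono : ∀ i j, 1 ≤ i → i ≤ j → j ≤ t → a j ≤ a i)
    (hcover : (b : ℝ) < mu a t)
    (hmin : mu a t - (a t : ℝ) ≤ (b : ℝ))
    (hh11 : 1 ≤ h₁) (hh1t : h₁ ≤ t - 1)
    (hh21 : 1 ≤ h₂) (hh2t : h₂ ≤ t - 1)
    (hsum : h₁ + h₂ - 1 ≤ t)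
    (hz1 : mu a h₁ - lam a t b < z₁) (hz2 : mu a h₂ - lam a t b < z₂) :
    mu a (h₁ + h₂ - 1) - lam a t b < z₁ + z₂ :=
  pair_sum_lower_bound_general t b a h₁ h₂ z₁ z₂ hmono hmin hh21 hh2t hsum hz1 hz2
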